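/- Suppose M satisfies conditions (*) and (**), λ ≠ 0 and λ ≠ 1, and let MC_λ(M) = (Ñ_r,…,Ñ_1). Then for every k ∈ {1,…,r} and every integer l ≥ 1, dim ker((Ñ_k − λ·id)^l) − dim ker((Ñ_k − λ·id)^{l−1}) = dim ker((M_k − 1)^{l+1}) − dim ker((M_k − 1)^l). (Equivalently, every Jordan block J(1, l) of M_k with l ≥ 2 contributes a Jordan block J(λ, l−1) to Ñ_k, and these account for all Jordan blocks of Ñ_k with eigenvalue λ.) -/

import Mathlib

open Module LinearMap Submodule

/-- The coefficient endomorphism appearing in the `k`-th row of the convolution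
operator `N_k`. -/
noncomputable def convCoeff {V : Type*} [AddCommGroup V] [Module ℂ V] {r : ℕ}
    (M : Fin r → Module.End ℂ V) (lam : ℂ) (k i : Fin r) : Module.End ℂ V :=
  if i < k then M i - 1 else if i = k then lam • M k else lam • (M i - 1)

/-- The convolution operator `N_k` on `V^r`: it leaves every component `v_j` with
`j ≠ k` unchanged and replaces the `k`-th component by
`(M_1 − 1)v_1 + ⋯ + (M_{k−1} − 1)v_{k−1} + λ M_k v_k + λ(M_{k+1} − 1)v_{k+1} + ⋯ + λ(M_r − 1)v_r`. -/
noncomputable def convOp {V : Type*} [AddCommGroup V] [Module ℂ V] {r : ℕ}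
    (M : Fin r → Module.End ℂ V) (lam : ℂ) (k : Fin r) :
    Module.End ℂ (Fin r → V) :=
  LinearMap.pi fun j =>
    if j = k then ∑ i : Fin r, convCoeff M lam k i ∘ₗ LinearMap.proj i
    else LinearMap.proj j

/-- The subspace `K_k = {(0,…,0,u,0,…,0)ᵀ : u ∈ ker(M_k − 1)}` (`u` in the `k`-th slot). -/
noncomputable def Ksub {V : Type*} [AddCommGroup V] [Module ℂ V] {r : ℕ}
    (M : Fin r → Module.End ℂ V) (k : Fin r) : Submodule ℂ (Fin r → V) :=
  Submodule.pi Set.univ fun j => if j = k then LinearMap.ker (M k - 1) else ⊥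

/-- The subspace `L = ⋂_k ker(N_k − 1)`. -/
noncomputable def Lsub {V : Type*} [AddCommGroup V] [Module ℂ V] {r : ℕ}
    (M : Fin r → Module.End ℂ V) (lam : ℂ) : Submodule ℂ (Fin r → V) :=
  ⨅ k : Fin r, LinearMap.ker (convOp M lam k - 1)

/-- The subspace `K + L` with `K = K_1 ⊕ ⋯ ⊕ K_r`. -/
noncomputable def KLsub {V : Type*} [AddCommGroup V] [Module ℂ V] {r : ℕ}
    (M : Fin r → Module.End ℂ V) (lam : ℂ) : Submodule ℂ (Fin r → V) :=
  (⨆ k : Fin r, Ksub M k) ⊔ Lsub M lam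

/-- The middle convolution operator `Ñ_k` induced by `N_k` on `V^r/(K + L)`. -/
noncomputable def mcOp {V : Type*} [AddCommGroup V] [Module ℂ V] {r : ℕ}
    (M : Fin r → Module.End ℂ V) (lam : ℂ)
    (h : ∀ k : Fin r, KLsub M lam ≤ (KLsub M lam).comap (convOp M lam k))
    (k : Fin r) : Module.End ℂ ((Fin r → V) ⧸ KLsub M lam) :=
  Submodule.mapQ _ _ (convOp M lam k) (h k)

/-- Condition (*): there is no nonzero `v ∈ V` fixed by all `M_j`, `j ≠ i`, which is an
eigenvector of `M_i`. -/
def CondStar {V : Type*} [AddCommGroup V] [Module ℂ V] {r : ℕ}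
    (M : Fin r → Module.End ℂ V) : Prop :=
  ∀ i : Fin r,
    ¬ ∃ v : V, v ≠ 0 ∧ (∀ j : Fin r, j ≠ i → M j v = v) ∧ ∃ a : ℂ, M i v = a • v

/-- Condition (**): there is no codimension-one subspace `W ⊆ V` invariant under all `M_j`
with `(M_j − 1)(V) ⊆ W` for all `j ≠ i`. -/
def CondStarStar {V : Type*} [AddCommGroup V] [Module ℂ V] {r : ℕ}
    (M : Fin r → Module.End ℂ V) : Prop :=
  ∀ i : Fin r,
    ¬ ∃ W : Submodule ℂ V, Module.finrank ℂ (V ⧸ W) = 1 ∧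
      (∀ j : Fin r, W.map (M j) ≤ W) ∧
      ∀ j : Fin r, j ≠ i → LinearMap.range (M j - 1) ≤ W

/-!
Put `F = N_k - λ` and `S = K + L`. Off the `k`-th slot `F` is the nonzero scalar `1 - λ`, so the
generalized kernel of `F` consists of vectors `e_k v` supported in slot `k`, on which
`F^l (e_k v) = e_k (λ^l (M_k - 1)^l v)`. By the Fitting decomposition, the generalized kernel of
the map induced by `F` on `V^r / S` is the image of the generalized kernel of `F`. Condition (*)
allows `e_k v ∈ S` only when `M_k v = v`: writing `e_k v = a + b` with `a ∈ K` and `b ∈ L`, the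
vector `(M_k - 1) v` is fixed by every `M_j` with `j ≠ k` and is an eigenvector of `M_k`.
Hence `ker (Ñ_k - λ)^l` is the image of `e_k (ker (M_k - 1)^(l+1))`, which meets `S` in
`e_k (ker (M_k - 1))`; the theorem is the difference of the resulting dimension formulas at `l`
and `l - 1`.
-/

namespace Submodule

variable {R X : Type*} [Ring R] [AddCommGroup X] [Module R X]

theorem mapQ_pow_mk (p : Submodule R X) (f : Module.End R X) (hf : p ≤ p.comap f) (l : ℕ)
    (x : X) : (p.mapQ p f hf ^ l) (Quotient.mk x) = Quotient.mk ((f ^ l) x) := by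
  rw [← mapQ_pow]
  rfl

section CommRing

variable {S : Type*} [CommRing S] [Module S X] (p : Submodule S X) (f : Module.End S X) (c : S)

theorem le_comap_sub_smul_one (hf : p ≤ p.comap f) : p ≤ p.comap (f - c • 1) := fun x hx => by
  simpa using sub_mem (mem_comap.mp (hf hx)) (smul_mem p c hx)

theorem mapQ_sub_smul_one (hf : p ≤ p.comap f) :
    p.mapQ p f hf - c • 1 = p.mapQ p (f - c • 1) (le_comap_sub_smul_one p f c hf) := by
  ext x
  simp

end CommRing

theorem ker_mapQ_pow_le_map_mkQ [IsNoetherian R X] [IsArtinian R X] (p : Submodule R X)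
    (f : Module.End R X) (hf : p ≤ p.comap f) (l : ℕ) :
    ker (p.mapQ p f hf ^ l) ≤ ((⨆ m, ker (f ^ m)) ⊓ p.comap (f ^ l)).map p.mkQ := by
  set g := p.mapQ p f hf
  rintro y hy
  obtain ⟨x, rfl⟩ := p.mkQ_surjective y
  obtain ⟨e, he, ρ, hρ, rfl⟩ := mem_sup.mp
    (f.isCompl_iSup_ker_pow_iInf_range_pow.sup_eq_top ▸ mem_top : x ∈ _ ⊔ _)
  have hge : p.mkQ e ∈ ⨆ m, ker (g ^ m) := by
    refine (iSup_le fun m z hz => ?_ : _ ≤ (⨆ m, ker (g ^ m)).comap p.mkQ) he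
    refine mem_iSup_of_mem m ?_
    rw [mkQ_apply, mem_ker, mapQ_pow_mk, mem_ker.mp hz, Quotient.mk_zero]
  have hgρ : p.mkQ ρ ∈ ⨅ m, range (g ^ m) := by
    rw [mem_iInf] at hρ ⊢
    intro m
    obtain ⟨z, hz⟩ := hρ m
    exact ⟨p.mkQ z, by rw [mkQ_apply, mapQ_pow_mk, hz, mkQ_apply]⟩
  have hρ0 : p.mkQ ρ = 0 := by
    have hy' : p.mkQ (e + ρ) ∈ ⨆ m, ker (g ^ m) := mem_iSup_of_mem l hy
    have : p.mkQ ρ ∈ (⨆ m, ker (g ^ m)) ⊓ ⨅ m, range (g ^ m) :=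
      ⟨by simpa using sub_mem hy' hge, hgρ⟩
    rwa [g.isCompl_iSup_ker_pow_iInf_range_pow.inf_eq_bot, mem_bot] at this
  have hye : p.mkQ e = p.mkQ (e + ρ) := by rw [map_add, hρ0, add_zero]
  refine ⟨e, ⟨he, ?_⟩, hye⟩
  rw [SetLike.mem_coe, mem_comap, ← Quotient.mk_eq_zero, ← mapQ_pow_mk p f hf, ← mkQ_apply, hye]
  exact hy

theorem finrank_map_mkQ_add_finrank_inf {K V : Type*} [DivisionRing K] [AddCommGroup V]
    [Module K V] (p W : Submodule K V) [FiniteDimensional K W] :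
    finrank K (W.map p.mkQ) + finrank K ↥(W ⊓ p) = finrank K W := by
  have := (p.mkQ.domRestrict W).finrank_range_add_finrank_ker
  rwa [range_domRestrict, ker_domRestrict, ker_mkQ, ← finrank_map_subtype_eq,
    map_comap_subtype] at this

end Submodule

section Convolution

variable {V : Type*} [AddCommGroup V] [Module ℂ V] {r : ℕ} (M : Fin r → Module.End ℂ V) (lam : ℂ)

theorem convOp_apply_of_ne {j k : Fin r} (x : Fin r → V) (hj : j ≠ k) :
    convOp M lam k x j = x j := by
  simp [convOp, hj]

theorem convOp_apply_self (k : Fin r) (x : Fin r → V) :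
    convOp M lam k x k = ∑ i, (if i < k then 1 else lam) • (M i - 1) (x i) + lam • x k := by
  have hcoeff : ∀ i, convCoeff M lam k i (x i) =
      (if i < k then 1 else lam) • (M i - 1) (x i) + if i = k then lam • x i else 0 := by
    intro i
    unfold convCoeff
    split_ifs <;> simp_all [smul_sub]
  simp only [convOp, pi_apply, LinearMap.sum_apply, comp_apply, proj_apply,
    hcoeff, Finset.sum_add_distrib, Finset.sum_ite_eq', Finset.mem_univ, if_true]

theorem mem_Lsub_iff (x : Fin r → V) :
    x ∈ Lsub M lam ↔
      ∀ j, ∑ i, (if i < j then 1 else lam) • (M i - 1) (x i) = (1 - lam) • x j := by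
  rw [Lsub, mem_iInf]
  refine forall_congr' fun j => ?_
  rw [mem_ker, LinearMap.sub_apply, Module.End.one_apply, sub_eq_zero, sub_smul, one_smul,
    eq_sub_iff_add_eq, ← convOp_apply_self]
  refine ⟨fun hx => congrFun hx j, fun hx => funext fun i => ?_⟩
  rcases eq_or_ne i j with rfl | hij
  · exact hx
  · exact convOp_apply_of_ne M lam x hij

theorem single_mem_Ksub {k : Fin r} {v : V} (hv : M k v = v) : Pi.single k v ∈ Ksub M k := by
  rw [Ksub, mem_pi]
  intro j _
  rcases eq_or_ne j k with rfl | hjk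
  · simp [hv]
  · simp [hjk]

theorem apply_eq_of_mem_iSup_Ksub {x : Fin r → V} (hx : x ∈ ⨆ k, Ksub M k) (i : Fin r) :
    M i (x i) = x i := by
  have hle : ⨆ k, Ksub M k ≤ pi Set.univ fun i => ker (M i - 1) :=
    iSup_le fun k => pi_mono fun j _ => by split_ifs with hjk <;> simp [hjk]
  simpa [sub_eq_zero] using (mem_pi.mp (hle hx)) i (Set.mem_univ i)

theorem single_mem_KLsub_iff (hlam0 : lam ≠ 0) (hstar : CondStar M) (k : Fin r) (v : V) :
    Pi.single k v ∈ KLsub M lam ↔ M k v = v := by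
  refine ⟨fun hv => ?_, fun hv => mem_sup_left (mem_iSup_of_mem k (single_mem_Ksub M hv))⟩
  obtain ⟨a, ha, b, hb, hab⟩ := mem_sup.mp hv
  set u := (M k - 1) v
  -- `b = e_k v - a` and `M_i - 1` kills every `a_i`, so only the `k`-th slot survives.
  have hMb : ∀ i, (M i - 1) (b i) = (Pi.single k u : Fin r → V) i := by
    intro i
    have hai : (M i - 1) (a i) = 0 := by
      rw [LinearMap.sub_apply, Module.End.one_apply, apply_eq_of_mem_iSup_Ksub M ha, sub_self]
    rw [← Pi.apply_single (fun i => ⇑(M i - 1)) (fun i => map_zero _), ← hab, Pi.add_apply,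
      map_add, hai, zero_add]
  have hrow : ∀ j, (if k < j then 1 else lam) • u = (1 - lam) • b j := by
    intro j
    rw [← (mem_Lsub_iff M lam b).mp hb j, Finset.sum_eq_single k]
    · rw [hMb, Pi.single_eq_same]
    · intro i _ hik
      rw [hMb, Pi.single_eq_of_ne hik, smul_zero]
    · simp
  have hfix : ∀ j, j ≠ k → M j u = u := by
    intro j hjk
    have h : (M j - 1) ((if k < j then 1 else lam) • u) = (M j - 1) ((1 - lam) • b j) := by
      rw [hrow j]
    rw [map_smul, map_smul, hMb, Pi.single_eq_of_ne hjk, smul_zero,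
      smul_eq_zero_iff_right (by split_ifs <;> simp [hlam0]), LinearMap.sub_apply,
      Module.End.one_apply, sub_eq_zero] at h
    exact h
  have heig : M k u = lam⁻¹ • u := by
    have h : (M k - 1) ((if k < k then 1 else lam) • u) = (M k - 1) ((1 - lam) • b k) := by
      rw [hrow k]
    rw [if_neg (lt_irrefl k), map_smul, map_smul, hMb, Pi.single_eq_same, LinearMap.sub_apply,
      Module.End.one_apply, smul_sub, sub_smul, one_smul, sub_left_inj] at h
    exact (eq_inv_smul_iff₀ hlam0).mpr h
  have hu : u = 0 := by
    by_contra hu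
    exact hstar k ⟨u, hu, hfix, lam⁻¹, heig⟩
  simpa [u, sub_eq_zero] using hu

theorem convOp_sub_smul_pow_apply_of_ne {j k : Fin r} (hj : j ≠ k) (l : ℕ) (x : Fin r → V) :
    ((convOp M lam k - lam • 1) ^ l) x j = (1 - lam) ^ l • x j := by
  induction l generalizing x with
  | zero => simp
  | succ n ih =>
    have hF : (convOp M lam k - lam • 1) x j = (1 - lam) • x j := by
      simp [convOp_apply_of_ne M lam x hj, sub_smul]
    rw [pow_succ, Module.End.mul_apply, ih, hF, smul_smul, pow_succ]

theorem convOp_sub_smul_single (k : Fin r) (v : V) :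
    (convOp M lam k - lam • 1) (Pi.single k v) = Pi.single k (lam • (M k - 1) v) := by
  funext j
  rcases eq_or_ne j k with rfl | hjk
  · rw [LinearMap.sub_apply, Pi.sub_apply, convOp_apply_self, Finset.sum_eq_single j]
    · simp [smul_sub]
    · intro i _ hij
      simp [Pi.single_eq_of_ne hij]
    · simp
  · rw [← pow_one (convOp M lam k - lam • 1), convOp_sub_smul_pow_apply_of_ne M lam hjk,
      Pi.single_eq_of_ne hjk, Pi.single_eq_of_ne hjk, smul_zero]

theorem convOp_sub_smul_pow_single (k : Fin r) (l : ℕ) (v : V) :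
    ((convOp M lam k - lam • 1) ^ l) (Pi.single k v) =
      Pi.single k (lam ^ l • ((M k - 1) ^ l) v) := by
  induction l with
  | zero => simp
  | succ n ih =>
    rw [pow_succ', Module.End.mul_apply, ih, convOp_sub_smul_single, map_smul, smul_smul,
      ← Module.End.mul_apply, ← pow_succ', ← pow_succ']

theorem iSup_ker_convOp_sub_smul_pow_le (hlam1 : lam ≠ 1) (k : Fin r) :
    ⨆ m, ker ((convOp M lam k - lam • 1) ^ m) ≤ range (LinearMap.single ℂ (fun _ => V) k) := by
  refine iSup_le fun m x hx => ⟨x k, funext fun j => ?_⟩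
  rcases eq_or_ne j k with rfl | hjk
  · simp
  · have h := congrFun (mem_ker.mp hx) j
    rw [convOp_sub_smul_pow_apply_of_ne M lam hjk, Pi.zero_apply,
      smul_eq_zero_iff_right (pow_ne_zero _ (sub_ne_zero.mpr hlam1.symm))] at h
    simp [Pi.single_eq_of_ne hjk, h]

theorem convOp_sub_smul_pow_single_mem_KLsub_iff (hlam0 : lam ≠ 0) (hstar : CondStar M)
    (k : Fin r) (l : ℕ) (v : V) :
    ((convOp M lam k - lam • 1) ^ l) (Pi.single k v) ∈ KLsub M lam ↔
      v ∈ ker ((M k - 1) ^ (l + 1)) := by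
  rw [convOp_sub_smul_pow_single, single_mem_KLsub_iff M lam hlam0 hstar, map_smul,
    smul_right_inj (pow_ne_zero _ hlam0), mem_ker, pow_succ', Module.End.mul_apply,
    LinearMap.sub_apply, Module.End.one_apply, sub_eq_zero]

theorem ker_mcOp_sub_smul_pow [FiniteDimensional ℂ V] (hlam0 : lam ≠ 0) (hlam1 : lam ≠ 1)
    (hstar : CondStar M)
    (h : ∀ k : Fin r, KLsub M lam ≤ (KLsub M lam).comap (convOp M lam k)) (k : Fin r) (l : ℕ) :
    ker ((mcOp M lam h k - lam • 1) ^ l) =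
      ((ker ((M k - 1) ^ (l + 1))).map (LinearMap.single ℂ (fun _ => V) k)).map
        (KLsub M lam).mkQ := by
  rw [mcOp, mapQ_sub_smul_one]
  refine le_antisymm ((ker_mapQ_pow_le_map_mkQ _ _ _ l).trans (map_mono ?_)) ?_
  · rintro x ⟨hx, hxS⟩
    obtain ⟨w, rfl⟩ := iSup_ker_convOp_sub_smul_pow_le M lam hlam1 k hx
    exact ⟨w, (convOp_sub_smul_pow_single_mem_KLsub_iff M lam hlam0 hstar k l w).mp hxS, rfl⟩
  · rintro _ ⟨_, ⟨w, hw, rfl⟩, rfl⟩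
    rw [mem_ker, mkQ_apply, mapQ_pow_mk, Quotient.mk_eq_zero]
    exact (convOp_sub_smul_pow_single_mem_KLsub_iff M lam hlam0 hstar k l w).mpr hw

theorem finrank_ker_mcOp_sub_smul_pow_add [FiniteDimensional ℂ V] (hlam0 : lam ≠ 0)
    (hlam1 : lam ≠ 1) (hstar : CondStar M)
    (h : ∀ k : Fin r, KLsub M lam ≤ (KLsub M lam).comap (convOp M lam k)) (k : Fin r) (l : ℕ) :
    finrank ℂ (ker ((mcOp M lam h k - lam • 1) ^ l)) + finrank ℂ (ker (M k - 1)) =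
      finrank ℂ (ker ((M k - 1) ^ (l + 1))) := by
  set e := LinearMap.single ℂ (fun _ : Fin r => V) k
  have he : Function.Injective e := fun _ _ hab => Pi.single_injective k hab
  have hinf : (ker ((M k - 1) ^ (l + 1))).map e ⊓ KLsub M lam = (ker (M k - 1)).map e := by
    ext x
    constructor
    · rintro ⟨⟨w, -, rfl⟩, hw⟩
      refine ⟨w, ?_, rfl⟩
      simpa [sub_eq_zero] using (single_mem_KLsub_iff M lam hlam0 hstar k w).mp hw
    · rintro ⟨w, hw, rfl⟩
      refine ⟨⟨w, ?_, rfl⟩, (single_mem_KLsub_iff M lam hlam0 hstar k w).mpr ?_⟩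
      · exact mem_ker.mpr (by rw [pow_succ, Module.End.mul_apply, mem_ker.mp hw, map_zero])
      · simpa [sub_eq_zero] using hw
  have hrank := finrank_map_mkQ_add_finrank_inf (KLsub M lam) ((ker ((M k - 1) ^ (l + 1))).map e)
  rwa [hinf, ← (equivMapOfInjective e he _).finrank_eq, ← (equivMapOfInjective e he _).finrank_eq,
    ← ker_mcOp_sub_smul_pow M lam hlam0 hlam1 hstar h] at hrank

end Convolution

theorem middle_convolution_jordan_eigenvalue_lambda_general
    {V : Type*} [AddCommGroup V] [Module ℂ V] [FiniteDimensional ℂ V]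
    {r : ℕ}
    (M : Fin r → Module.End ℂ V)
    (hstar : CondStar M)
    (lam : ℂ) (hlam0 : lam ≠ 0) (hlam1 : lam ≠ 1)
    (h : ∀ k : Fin r, KLsub M lam ≤ (KLsub M lam).comap (convOp M lam k))
    (k : Fin r) :
    ∀ l : ℕ, 1 ≤ l →
      (Module.finrank ℂ (LinearMap.ker ((mcOp M lam h k - lam • 1) ^ l)) : ℤ) -
        (Module.finrank ℂ (LinearMap.ker ((mcOp M lam h k - lam • 1) ^ (l - 1))) : ℤ) =
      (Module.finrank ℂ (LinearMap.ker ((M k - 1) ^ (l + 1))) : ℤ) -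
        (Module.finrank ℂ (LinearMap.ker ((M k - 1) ^ l)) : ℤ) := by
  intro l hl
  obtain ⟨m, rfl⟩ : ∃ m, l = m + 1 := ⟨l - 1, by omega⟩
  have hsucc := finrank_ker_mcOp_sub_smul_pow_add M lam hlam0 hlam1 hstar h k (m + 1)
  have hm := finrank_ker_mcOp_sub_smul_pow_add M lam hlam0 hlam1 hstar h k m
  rw [Nat.add_sub_cancel]
  omega

/-- for `λ ≠ 0, 1`, the Jordan blocks of `Ñ_k` with eigenvalue `λ` come
exactly from the Jordan blocks `J(1, l+1)` of `M_k` (with length dropped by one):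
`dim ker((Ñ_k − λ)^l) − dim ker((Ñ_k − λ)^{l−1}) = dim ker((M_k − 1)^{l+1}) − dim ker((M_k − 1)^l)`
for all `l ≥ 1`. -/
theorem middle_convolution_jordan_eigenvalue_lambda
    {V : Type*} [AddCommGroup V] [Module ℂ V] [FiniteDimensional ℂ V]
    {r : ℕ} (hr : 1 ≤ r)
    (M : Fin r → Module.End ℂ V) (hM : ∀ i : Fin r, Function.Bijective (M i))
    (hstar : CondStar M) (hstarstar : CondStarStar M)
    (lam : ℂ) (hlam0 : lam ≠ 0) (hlam1 : lam ≠ 1)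
    (h : ∀ k : Fin r, KLsub M lam ≤ (KLsub M lam).comap (convOp M lam k))
    (k : Fin r) :
    ∀ l : ℕ, 1 ≤ l →
      (Module.finrank ℂ (LinearMap.ker ((mcOp M lam h k - lam • 1) ^ l)) : ℤ) -
        (Module.finrank ℂ (LinearMap.ker ((mcOp M lam h k - lam • 1) ^ (l - 1))) : ℤ) =
      (Module.finrank ℂ (LinearMap.ker ((M k - 1) ^ (l + 1))) : ℤ) -
        (Module.finrank ℂ (LinearMap.ker ((M k - 1) ^ l)) : ℤ) :=
  middle_convolution_jordan_eigenvalue_lambda_general M hstar lam hlam0 hlam1 h k
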